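/- Let E = |e| tan(θ/2) + e be a hyperedge with e a nonzero pure imaginary quaternion, θ ∈ (-π, π). Then conjugation by E⁻¹ (the map v ↦ E⁻¹ v E) fixes e and acts on the orthogonal complement of e inside Im ℍ as a rotation by angle θ - π about the axis e/|e|. -/

import Mathlib

open Quaternion

lemma aux_anticomm (e v : ℍ[ℝ]) (he : e.re = 0) (hv : v.re = 0)
    (h : (inner ℝ v e : ℝ) = 0) : e * v = -(v * e) := by
  have hs : star e = -e := Quaternion.star_eq_neg.2 he
  rw [Quaternion.inner_def, hs, mul_neg, re_neg, neg_eq_zero] at h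
  ext <;>
    simp [Quaternion.re_mul, Quaternion.imI_mul, Quaternion.imJ_mul,
      Quaternion.imK_mul, he, hv] at h ⊢ <;> linarith

lemma aux_sq (e : ℍ[ℝ]) (he : e.re = 0) : e * e = ((-(‖e‖^2) : ℝ) : ℍ[ℝ]) := by
  have hs : star e = -e := Quaternion.star_eq_neg.2 he
  have h1 : e * e = -(e * star e) := by rw [hs, mul_neg, neg_neg]
  rw [h1, Quaternion.mul_star_eq_coe, ← Quaternion.normSq_def,
    Quaternion.normSq_eq_norm_mul_self]
  push_cast
  rw [sq]

lemma aux_alg (e v : ℍ[ℝ]) (a c s n : ℝ) (hn : n ≠ 0)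
    (hee : e * e = ((-(n^2) : ℝ) : ℍ[ℝ]))
    (hve : v * e = -(e * v))
    (hA : c * a - s * n = a)
    (hB : c + s * a * n⁻¹ = -1) :
    v * (((a:ℝ) : ℍ[ℝ]) + e) = (((a:ℝ) : ℍ[ℝ]) + e) * (c • v + s • ((n⁻¹ • e) * v)) := by
  have hni : n⁻¹ * n ^ 2 = n := by field_simp
  simp only [mul_add, add_mul, smul_mul_assoc, mul_smul_comm, Quaternion.coe_mul_eq_smul,
    Quaternion.mul_coe_eq_smul, smul_smul, hve, ← mul_assoc, hee]
  match_scalars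
  · linear_combination -hA + s * hni
  · linear_combination -hB

/-- Let `E = |e| tan(θ/2) + e` be a hyperedge, `e` a nonzero pure imaginary
quaternion, `θ ∈ (-π, π)`. Conjugation by `E⁻¹`, i.e. `v ↦ E⁻¹ v E`, fixes
`e`, and acts on the orthogonal complement of `e` inside `Im ℍ` as the
rotation by angle `θ - π` about the axis `u = e/|e|`: for pure imaginary `v`
orthogonal to `e`, `E⁻¹ v E = cos(θ - π) • v + sin(θ - π) • (u * v)`
(where `u * v` is the cross product `u × v` for `v ⊥ u`). -/
theorem hyperedge_conjugation_rotation
    (e : ℍ[ℝ]) (he_im : e.re = 0) (he : e ≠ 0)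
    (θ : ℝ) (hθ₁ : -Real.pi < θ) (hθ₂ : θ < Real.pi) :
    let E : ℍ[ℝ] := ((‖e‖ * Real.tan (θ / 2) : ℝ) : ℍ[ℝ]) + e
    E⁻¹ * e * E = e ∧
      ∀ v : ℍ[ℝ], v.re = 0 → (inner ℝ v e : ℝ) = 0 →
        E⁻¹ * v * E =
          Real.cos (θ - Real.pi) • v +
            Real.sin (θ - Real.pi) • ((‖e‖⁻¹ • e) * v) := by
  intro E
  set a : ℝ := ‖e‖ * Real.tan (θ / 2) with ha
  have hne : ‖e‖ ≠ 0 := norm_ne_zero_iff.2 he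
  have hee : e * e = ((-(‖e‖^2) : ℝ) : ℍ[ℝ]) := aux_sq e he_im
  -- E ≠ 0
  have hE : E ≠ 0 := by
    intro h0
    have h1 : e = -((a : ℝ) : ℍ[ℝ]) := eq_neg_of_add_eq_zero_right h0
    have h3 : e.imI = 0 ∧ e.imJ = 0 ∧ e.imK = 0 := by rw [h1]; simp
    exact he (by ext <;> simp [he_im, h3.1, h3.2.1, h3.2.2])
  -- trigonometry
  have hcos : Real.cos (θ/2) ≠ 0 := by
    refine ne_of_gt (Real.cos_pos_of_mem_Ioo ⟨?_, ?_⟩) <;> [linarith; linarith]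
  have hpyth : Real.sin (θ/2)^2 + Real.cos (θ/2)^2 = 1 := Real.sin_sq_add_cos_sq _
  have hsinθ : Real.sin θ = 2 * Real.sin (θ/2) * Real.cos (θ/2) := by
    have := Real.sin_two_mul (θ/2); rw [show 2 * (θ/2) = θ by ring] at this; linarith
  have hcosθ : Real.cos θ = 2 * Real.cos (θ/2)^2 - 1 := by
    have := Real.cos_two_mul (θ/2); rw [show 2 * (θ/2) = θ by ring] at this; linarith
  have t1 : Real.sin θ * Real.cos (θ/2) - Real.cos θ * Real.sin (θ/2) = Real.sin (θ/2) := by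
    linear_combination Real.cos (θ/2) * hsinθ - Real.sin (θ/2) * hcosθ
  have t2 : Real.cos θ * Real.cos (θ/2) + Real.sin θ * Real.sin (θ/2) = Real.cos (θ/2) := by
    linear_combination Real.cos (θ/2) * hcosθ + Real.sin (θ/2) * hsinθ +
      2 * Real.cos (θ/2) * hpyth
  set c : ℝ := Real.cos (θ - Real.pi) with hc
  set s : ℝ := Real.sin (θ - Real.pi) with hs
  have hcval : c = -Real.cos θ := by
    rw [hc, Real.cos_sub, Real.cos_pi, Real.sin_pi]; ring
  have hsval : s = -Real.sin θ := by
    rw [hs, Real.sin_sub, Real.cos_pi, Real.sin_pi]; ring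
  have hA : c * a - s * ‖e‖ = a := by
    rw [hcval, hsval, ha, Real.tan_eq_sin_div_cos]
    field_simp
    linear_combination t1
  have hB : c + s * a * ‖e‖⁻¹ = -1 := by
    rw [hcval, hsval, ha, Real.tan_eq_sin_div_cos]
    field_simp
    linear_combination -t2
  constructor
  · have hcomm : e * E = E * e := by
      show e * (((a:ℝ):ℍ[ℝ]) + e) = (((a:ℝ):ℍ[ℝ]) + e) * e
      rw [add_mul, mul_add, Quaternion.coe_commutes]
    rw [mul_assoc, hcomm, ← mul_assoc, inv_mul_cancel₀ hE, one_mul]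
  · intro v hv hvo
    have hev : e * v = -(v * e) := aux_anticomm e v he_im hv hvo
    have hve : v * e = -(e * v) := by rw [hev, neg_neg]
    rw [mul_assoc, inv_mul_eq_iff_eq_mul₀ hE]
    exact aux_alg e v a c s ‖e‖ hne hee hve hA hB
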